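/- Let n ≥ 4 be an integer, x ≥ 0 a real number, and a_0(n), a_1(n) real sequences. Then V_{n,1}(e_2; x) = (2a_0(n) − a_1(n))x² + (1/((n−2)(n−3)))·[a_0(n)(8+10x−8x²) + a_1(n)(−6−10x+2x²) + n{a_0(n)(10x+16x²) − a_1(n)(6x+10x²)}], where e_2(t) = t² (in particular the defining series and integrals converge absolutely). -/

import Mathlib

/-!
The weights of the Durrmeyer integrals are Beta integrals: integrating by parts gives
`∫₀^∞ t^a (1+t)^{-(a+m+2)} dt = a! m! / (a+m+1)!`, hence
`∫₀^∞ p_{n,k}(t) t² dt = (k+1)(k+2) / ((n-1)(n-2)(n-3))`.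
Summing this quadratic in `k` against `p^1_{n,k}(x)` needs only the factorial moments
`∑ k p_{m,k}(x) = m x` and `∑ k(k-1) p_{m,k}(x) = m(m+1) x²`, which follow from the negative
binomial series `∑ p_{m,k}(x) = 1` and the index shift `(k+1) p_{m,k+1}(x) = m x p_{m+1,k}(x)`;
the `p_{n+1,k-1}` part is the same sum with `k` shifted by one.
-/

open MeasureTheory Filter Topology

/-- Baskakov basis function `p_{n,k}(x) = C(n+k-1, k) x^k / (1+x)^{n+k}`. -/
noncomputable def bask (n k : ℕ) (x : ℝ) : ℝ :=
  (Nat.choose (n + k - 1) k : ℝ) * x ^ k / (1 + x) ^ (n + k)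

/-- Modified basis `p^1_{n,k}(x) = a(x,n) p_{n+1,k}(x) + b(x,n) p_{n+1,k-1}(x)`,
with `p_{n+1,-1} = 0`. -/
noncomputable def p1 (a0 a1 : ℕ → ℝ) (n k : ℕ) (x : ℝ) : ℝ :=
  (a0 n + a1 n * x) * bask (n + 1) k x
    + (a0 n - a1 n * (1 + x)) * (if k = 0 then 0 else bask (n + 1) (k - 1) x)

/-- First-order modified Baskakov–Durrmeyer operator. -/
noncomputable def V1 (a0 a1 : ℕ → ℝ) (n : ℕ) (f : ℝ → ℝ) (x : ℝ) : ℝ :=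
  ((n : ℝ) - 1) * ∑' k : ℕ, p1 a0 a1 n k x * ∫ t in Set.Ioi (0 : ℝ), bask n k t * f t

open Set

lemma pow_div_one_add_pow_add_le (a c : ℕ) {t : ℝ} (ht : 0 ≤ t) :
    t ^ a / (1 + t) ^ (a + c) ≤ ((1 + t) ^ c)⁻¹ := by
  have h1t : 0 < 1 + t := by linarith
  rw [pow_add, ← div_div, div_eq_mul_inv]
  refine mul_le_of_le_one_left (by positivity) ?_
  exact div_le_one_of_le₀ (pow_le_pow_left₀ ht (by linarith) a) (by positivity)

lemma integrableOn_pow_div_one_add_pow {a b : ℕ} (hab : a + 2 ≤ b) :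
    IntegrableOn (fun t : ℝ => t ^ a / (1 + t) ^ b) (Ioi 0) := by
  obtain ⟨c, rfl⟩ : ∃ c, b = a + c := ⟨b - a, by omega⟩
  have hdom : IntegrableOn (fun t : ℝ => (1 + ‖t‖) ^ (-2 : ℝ)) (Ioi 0) :=
    (integrable_one_add_norm (E := ℝ) (by norm_num)).integrableOn
  refine hdom.mono' (by fun_prop : Measurable _).aestronglyMeasurable ?_
  filter_upwards [ae_restrict_mem measurableSet_Ioi] with t (ht : 0 < t)
  have h1t : 1 ≤ 1 + t := by linarith
  rw [Real.norm_of_nonneg (by positivity), Real.norm_of_nonneg ht.le,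
    Real.rpow_neg (by positivity), Real.rpow_two]
  calc t ^ a / (1 + t) ^ (a + c) ≤ ((1 + t) ^ c)⁻¹ := pow_div_one_add_pow_add_le a c ht.le
    _ ≤ ((1 + t) ^ 2)⁻¹ := inv_anti₀ (by positivity) (pow_le_pow_right₀ h1t (by omega))

lemma tendsto_inv_one_add_pow_succ_atTop (m : ℕ) :
    Tendsto (fun t : ℝ => ((1 + t) ^ (m + 1))⁻¹) atTop (𝓝 0) :=
  ((tendsto_pow_atTop m.succ_ne_zero).comp
    (tendsto_atTop_add_const_left _ 1 tendsto_id)).inv_tendsto_atTop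

lemma integral_inv_one_add_pow (m : ℕ) :
    ∫ t in Ioi (0 : ℝ), ((1 + t) ^ (m + 2))⁻¹ = 1 / (m + 1) := by
  have hderiv : ∀ t ∈ Ici (0 : ℝ), HasDerivAt (fun t : ℝ => -((1 + t) ^ (m + 1))⁻¹ / (m + 1))
      ((1 + t) ^ (m + 2))⁻¹ t := by
    intro t (ht : 0 ≤ t)
    have h1t : 1 + t ≠ 0 := by positivity
    refine ((((hasDerivAt_id t).const_add 1).fun_pow (m + 1)).fun_inv (pow_ne_zero _ h1t)
      |>.neg.div_const ((m : ℝ) + 1)).congr_deriv ?_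
    simp only [id, Nat.add_sub_cancel, Nat.cast_add, Nat.cast_one, mul_one]
    field_simp
    ring
  have hlim : Tendsto (fun t : ℝ => -((1 + t) ^ (m + 1))⁻¹ / (m + 1)) atTop (𝓝 0) := by
    simpa using (tendsto_inv_one_add_pow_succ_atTop m).neg.div_const ((m : ℝ) + 1)
  have hint : IntegrableOn (fun t : ℝ => ((1 + t) ^ (m + 2))⁻¹) (Ioi 0) := by
    simpa using integrableOn_pow_div_one_add_pow (a := 0) (b := m + 2) (by omega)
  rw [integral_Ioi_of_hasDerivAt_of_tendsto' hderiv hint hlim]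
  simp [neg_div]

lemma integral_pow_succ_div_one_add_pow (a m : ℕ) :
    ((a : ℝ) + m + 2) * ∫ t in Ioi (0 : ℝ), t ^ (a + 1) / (1 + t) ^ (a + m + 3)
      = (a + 1) * ∫ t in Ioi (0 : ℝ), t ^ a / (1 + t) ^ (a + m + 2) := by
  set F : ℝ → ℝ := fun t => t ^ (a + 1) / (1 + t) ^ (a + m + 2)
  have hderiv : ∀ t ∈ Ici (0 : ℝ), HasDerivAt F ((a + 1) * (t ^ a / (1 + t) ^ (a + m + 2))
      - (a + m + 2) * (t ^ (a + 1) / (1 + t) ^ (a + m + 3))) t := by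
    intro t (ht : 0 ≤ t)
    have h1t : 1 + t ≠ 0 := by positivity
    refine ((hasDerivAt_pow (a + 1) t).fun_div (((hasDerivAt_id t).const_add 1).fun_pow _)
      (pow_ne_zero _ h1t)).congr_deriv ?_
    simp only [id, show a + m + 2 - 1 = a + m + 1 by omega, Nat.add_sub_cancel, Nat.cast_add,
      Nat.cast_one, Nat.cast_ofNat, mul_one]
    field_simp
    ring
  have hlim : Tendsto F atTop (𝓝 0) := by
    refine squeeze_zero' ?_ ?_ (tendsto_inv_one_add_pow_succ_atTop m)
    · filter_upwards [eventually_ge_atTop 0] with t ht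
      positivity
    · filter_upwards [eventually_ge_atTop 0] with t ht
      simpa [F, show a + m + 2 = (a + 1) + (m + 1) by ring] using
        pow_div_one_add_pow_add_le (a + 1) (m + 1) ht
  have hJ := integrableOn_pow_div_one_add_pow (a := a) (b := a + m + 2) (by omega)
  have hJ' := integrableOn_pow_div_one_add_pow (a := a + 1) (b := a + m + 3) (by omega)
  have h := integral_Ioi_of_hasDerivAt_of_tendsto' hderiv
    ((hJ.const_mul _).sub (hJ'.const_mul _)) hlim
  rw [integral_sub (hJ.const_mul _) (hJ'.const_mul _), integral_const_mul,
    integral_const_mul] at h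
  have hF0 : F 0 = 0 := by simp [F]
  linarith

theorem integral_pow_div_one_add_pow (a m : ℕ) :
    ∫ t in Ioi (0 : ℝ), t ^ a / (1 + t) ^ (a + m + 2)
      = (a.factorial * m.factorial : ℝ) / (a + m + 1).factorial := by
  induction a with
  | zero =>
    simp only [pow_zero, zero_add, one_div, Nat.factorial_zero, Nat.cast_one, one_mul,
      integral_inv_one_add_pow, Nat.factorial_succ]
    push_cast
    field_simp
  | succ a ih =>
    have h := integral_pow_succ_div_one_add_pow a m
    rw [ih] at h
    rw [show a + 1 + m + 2 = a + m + 3 by ring, show a + 1 + m + 1 = a + m + 1 + 1 by ring,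
      Nat.factorial_succ (a + m + 1), Nat.factorial_succ a]
    push_cast
    field_simp at h ⊢
    linear_combination h

lemma bask_mul_sq (n k : ℕ) (t : ℝ) :
    bask n k t * t ^ 2 = (n + k - 1).choose k * (t ^ (k + 2) / (1 + t) ^ (n + k)) := by
  unfold bask
  ring

lemma integrableOn_bask_mul_sq {n : ℕ} (hn : 4 ≤ n) (k : ℕ) :
    IntegrableOn (fun t : ℝ => bask n k t * t ^ 2) (Ioi 0) := by
  simp_rw [bask_mul_sq]
  exact (integrableOn_pow_div_one_add_pow (by omega)).const_mul _

lemma integral_bask_mul_sq {n : ℕ} (hn : 4 ≤ n) (k : ℕ) :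
    ∫ t in Ioi (0 : ℝ), bask n k t * t ^ 2
      = ((k : ℝ) + 1) * (k + 2) / ((n - 1) * (n - 2) * (n - 3)) := by
  obtain ⟨j, rfl⟩ : ∃ j, n = j + 4 := ⟨n - 4, by omega⟩
  simp_rw [bask_mul_sq]
  rw [integral_const_mul, show j + 4 + k = k + 2 + j + 2 by ring, integral_pow_div_one_add_pow,
    show k + 2 + j + 2 - 1 = k + (j + 3) by omega, Nat.cast_add_choose,
    show k + 2 + j + 1 = k + (j + 3) by ring]
  simp only [Nat.factorial_succ]
  push_cast
  rw [show ((j : ℝ) + 4 - 1) * (j + 4 - 2) * (j + 4 - 3) = (j + 3) * (j + 2) * (j + 1) by ring]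
  field_simp
  ring

lemma hasSum_bask {m : ℕ} (hm : 1 ≤ m) {x : ℝ} (hx : 0 ≤ x) :
    HasSum (fun k => bask m k x) 1 := by
  obtain ⟨j, rfl⟩ : ∃ j, m = j + 1 := ⟨m - 1, by omega⟩
  have h1x : 0 < 1 + x := by linarith
  have hr : ‖x / (1 + x)‖ < 1 := by
    rw [Real.norm_of_nonneg (by positivity), div_lt_one h1x]
    linarith
  have hsum := (hasSum_choose_mul_geometric_of_norm_lt_one j hr).div_const ((1 + x) ^ (j + 1))
  rw [show 1 - x / (1 + x) = (1 + x)⁻¹ by field_simp; ring, inv_pow, one_div, inv_inv,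
    div_self (by positivity)] at hsum
  refine hsum.congr_fun fun k => ?_
  rw [bask, show j + 1 + k - 1 = k + j by omega, Nat.choose_symm_add, div_pow,
    show j + 1 + k = k + (j + 1) by ring, pow_add]
  field_simp

lemma succ_mul_bask_succ (m k : ℕ) (x : ℝ) :
    ((k : ℝ) + 1) * bask m (k + 1) x = m * x * bask (m + 1) k x := by
  have hchoose : ((m + k).choose (k + 1) : ℝ) * (k + 1) = (m + k).choose k * m := by
    exact_mod_cast (Nat.choose_succ_right_eq (m + k) k).trans (by rw [Nat.add_sub_cancel])
  simp only [bask, show m + 1 + k - 1 = m + k by omega, show m + (k + 1) = m + 1 + k by omega]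
  linear_combination x ^ (k + 1) / (1 + x) ^ (m + 1 + k) * hchoose

lemma hasSum_natCast_mul_bask (m : ℕ) {x : ℝ} (hx : 0 ≤ x) :
    HasSum (fun k : ℕ => (k : ℝ) * bask m k x) (m * x) := by
  rw [← hasSum_nat_add_iff' 1, Finset.sum_range_one, Nat.cast_zero, zero_mul, sub_zero,
    ← mul_one ((m : ℝ) * x)]
  refine ((hasSum_bask (m := m + 1) (by omega) hx).mul_left (m * x)).congr_fun fun k => ?_
  rw [Nat.cast_succ, succ_mul_bask_succ]

lemma hasSum_natCast_mul_pred_mul_bask (m : ℕ) {x : ℝ} (hx : 0 ≤ x) :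
    HasSum (fun k : ℕ => (k : ℝ) * (k - 1) * bask m k x) (m * (m + 1) * x ^ 2) := by
  rw [← hasSum_nat_add_iff' 2, ← mul_one ((m : ℝ) * (m + 1) * x ^ 2)]
  simp only [Finset.sum_range_succ, Finset.sum_range_zero, Nat.cast_zero, Nat.cast_one, zero_mul,
    sub_self, mul_zero, add_zero, sub_zero]
  refine ((hasSum_bask (m := m + 2) (by omega) hx).mul_left (m * (m + 1) * x ^ 2)).congr_fun
    fun k => ?_
  have h1 := succ_mul_bask_succ m (k + 1) x
  have h2 := succ_mul_bask_succ (m + 1) k x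
  push_cast at h1 h2 ⊢
  linear_combination ((k : ℝ) + 1) * h1 + (m : ℝ) * x * h2

lemma hasSum_quadratic_mul_bask {m : ℕ} (hm : 1 ≤ m) {x : ℝ} (hx : 0 ≤ x) (c d : ℝ) :
    HasSum (fun k : ℕ => (k + c) * (k + d) * bask m k x)
      (m * (m + 1) * x ^ 2 + (1 + c + d) * (m * x) + c * d) := by
  convert ((hasSum_natCast_mul_pred_mul_bask m hx).add
    ((hasSum_natCast_mul_bask m hx).mul_left (1 + c + d))).add
    ((hasSum_bask hm hx).mul_left (c * d)) using 1
  · ext k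
    ring
  · ring

lemma hasSum_mul_ite_pred {f g : ℕ → ℝ} {s : ℝ} (h : HasSum (fun k => f (k + 1) * g k) s) :
    HasSum (fun k => f k * if k = 0 then 0 else g (k - 1)) s := by
  rw [← hasSum_nat_add_iff' 1]
  simpa using h

theorem V1_moment_e2 (n : ℕ) (hn : 4 ≤ n) (x : ℝ) (hx : 0 ≤ x) (a0 a1 : ℕ → ℝ) :
    (∀ k : ℕ, IntegrableOn (fun t : ℝ => bask n k t * t ^ 2) (Set.Ioi 0)) ∧
    Summable (fun k : ℕ =>
      |p1 a0 a1 n k x * ∫ t in Set.Ioi (0 : ℝ), bask n k t * t ^ 2|) ∧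
    V1 a0 a1 n (fun t => t ^ 2) x =
      (2 * a0 n - a1 n) * x ^ 2 + (1 / (((n : ℝ) - 2) * ((n : ℝ) - 3))) *
        (a0 n * (8 + 10 * x - 8 * x ^ 2) + a1 n * (-6 - 10 * x + 2 * x ^ 2)
          + (n : ℝ) * (a0 n * (10 * x + 16 * x ^ 2) - a1 n * (6 * x + 10 * x ^ 2))) := by
  set c : ℝ := (n - 1) * (n - 2) * (n - 3)
  set A := a0 n + a1 n * x
  set B := a0 n - a1 n * (1 + x)
  have hm : 1 ≤ n + 1 := Nat.le_add_left 1 n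
  have hs1 := (hasSum_quadratic_mul_bask hm hx 1 2).mul_left (A / c)
  have hs2 := (hasSum_mul_ite_pred (f := fun k : ℕ => ((k : ℝ) + 1) * (k + 2))
    (g := fun k => bask (n + 1) k x)
    ((hasSum_quadratic_mul_bask hm hx 2 3).congr_fun fun k => by push_cast; ring)).mul_left (B / c)
  have hsum : HasSum (fun k => p1 a0 a1 n k x * ∫ t in Ioi (0 : ℝ), bask n k t * t ^ 2) _ :=
    (hs1.add hs2).congr_fun fun k => by
      rw [integral_bask_mul_sq hn, p1]
      ring
  refine ⟨integrableOn_bask_mul_sq hn, summable_abs_iff.mpr hsum.summable, ?_⟩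
  have hn' : (4 : ℝ) ≤ n := by exact_mod_cast hn
  have h1 : (n : ℝ) - 1 ≠ 0 := by linarith
  have h2 : (n : ℝ) - 2 ≠ 0 := by linarith
  have h3 : (n : ℝ) - 3 ≠ 0 := by linarith
  rw [V1, hsum.tsum_eq]
  simp only [c, A, B]
  push_cast
  field_simp
  ring
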